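/- Let ε > 0, let N ≥ 1 be an integer, and let x be a strictly ordered particle solution on [0,∞). Then for every p ∈ (1,∞] and every t ≥ 0, ‖ρ^N(·,t)‖_{L^p(ℝ)} ≤ ‖ρ^N(·,0)‖_{L^p(ℝ)}. -/

import Mathlib

open MeasureTheory Real Set
open scoped ENNReal

/-- Scaled Morse potential `W_ε(x) = (1/(2ε)) e^{-|x|/ε}`. -/
noncomputable def Morse (ε x : ℝ) : ℝ := (1 / (2 * ε)) * Real.exp (-|x| / ε)

/-- Derivative of the scaled Morse potential,
`W_ε'(x) = -(1/(2ε²)) sign(x) e^{-|x|/ε}`. -/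
noncomputable def Morse' (ε x : ℝ) : ℝ :=
  -(1 / (2 * ε ^ 2)) * Real.sign x * Real.exp (-|x| / ε)

/-- Right-hand side of the particle ODE system:
`(1/N) ∑_{k=0}^{N-1} (W_ε(x_{k+1}-x_i) - W_ε(x_k-x_i))/(x_{k+1}-x_k)`. -/
noncomputable def particleRHS (ε : ℝ) (N : ℕ) (x : ℕ → ℝ) (i : ℕ) : ℝ :=
  (1 / (N : ℝ)) * ∑ k ∈ Finset.range N,
    (Morse ε (x (k + 1) - x i) - Morse ε (x k - x i)) / (x (k + 1) - x k)

/-- A strictly ordered particle solution on `[0,∞)`:  a differentiable curve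
`x = (x_0,…,x_N)` with `x_0(t) < ⋯ < x_N(t)` for all `t ≥ 0`, solving the particle ODE. -/
def IsParticleSol (ε : ℝ) (N : ℕ) (x : ℝ → ℕ → ℝ) : Prop :=
  (∀ t : ℝ, 0 ≤ t → ∀ i < N, x t i < x t (i + 1)) ∧
  (∀ i ≤ N, ∀ t : ℝ, 0 ≤ t →
    HasDerivWithinAt (fun s => x s i) (particleRHS ε N (x t) i) (Set.Ici 0) t)

/-- The discrete (piecewise constant) density
`ρ^N(y,t) = ∑_{k=0}^{N-1} R_k(t) 1_{[x_k(t), x_{k+1}(t))}(y)` with `R_k = 1/(N d_k)`. -/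
noncomputable def discDens (N : ℕ) (x : ℝ → ℕ → ℝ) (y t : ℝ) : ℝ :=
  ∑ k ∈ Finset.range N,
    Set.indicator (Set.Ico (x t k) (x t (k + 1)))
      (fun _ => 1 / ((N : ℝ) * (x t (k + 1) - x t k))) y

/-- Convolution in the space variable: `(W ∗ ρ)(x) = ∫ W(x-y) ρ(y) dy`. -/
noncomputable def conv (W ρ : ℝ → ℝ) (x : ℝ) : ℝ := ∫ y, W (x - y) * ρ y


/-!
With gaps `d_k = x_{k+1} - x_k` one has `‖ρ^N‖_p^p = N^{-p} ∑_k d_k^{1-p}` and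
`‖ρ^N‖_∞ = N⁻¹ max_k d_k⁻¹`. Write `W_ε = (G - |·|/2)/ε²` with `G'' = W_ε`. The particle system
then reads `ḋ_i = (1 - ∑_k A_ik / d_k)/(N ε²)`, where `A_ik = ∫_{I_i} ∫_{I_k} W_ε(y - z)` is
symmetric, nonnegative and has row sums at most `d_i`. Young's inequality
`d_i^{-p} / d_k ≤ p/(p+1) d_i^{-p-1} + 1/(p+1) d_k^{-p-1}` and the symmetry of `A` give
`d/dt ∑_k d_k^{1-p} ≤ 0`. For `p = ∞`, `max_k d_k⁻¹` is recovered from the power sums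
`∑_k d_k^{-n}` as `n → ∞`.
-/

open Finset

noncomputable def morseSecondPrimitive (ε z : ℝ) : ℝ := ε / 2 * Real.exp (-|z| / ε) + |z| / 2

/-- `∫_u^v ∫_a^b W_ε(y - z) dy dz`, since `morseSecondPrimitive ε` is a second primitive of
`Morse ε`. -/
noncomputable def morseInteraction (ε u v a b : ℝ) : ℝ :=
  morseSecondPrimitive ε (b - u) + morseSecondPrimitive ε (a - v)
    - morseSecondPrimitive ε (a - u) - morseSecondPrimitive ε (b - v)

lemma morseSecondPrimitive_sub_comm (ε a b : ℝ) :
    morseSecondPrimitive ε (a - b) = morseSecondPrimitive ε (b - a) := by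
  simp only [morseSecondPrimitive, abs_sub_comm]

lemma morseInteraction_comm (ε u v a b : ℝ) :
    morseInteraction ε u v a b = morseInteraction ε a b u v := by
  simp only [morseInteraction, morseSecondPrimitive_sub_comm ε _ u,
    morseSecondPrimitive_sub_comm ε _ v]
  ring

lemma morse_eq_morseSecondPrimitive {ε : ℝ} (hε : ε ≠ 0) (z : ℝ) :
    Morse ε z = (morseSecondPrimitive ε z - |z| / 2) / ε ^ 2 := by
  simp only [Morse, morseSecondPrimitive]
  field_simp
  ring

lemma morseSecondPrimitive_sub_le {ε : ℝ} (hε : 0 < ε) {A B : ℝ} (hB : 0 ≤ B) (hBA : B ≤ A) :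
    morseSecondPrimitive ε A - morseSecondPrimitive ε B ≤ (A - B) / 2 := by
  have hexp : Real.exp (-A / ε) ≤ Real.exp (-B / ε) := by gcongr
  simp only [morseSecondPrimitive, abs_of_nonneg hB, abs_of_nonneg (hB.trans hBA)]
  nlinarith

lemma exp_neg_div_add_exp_neg_div_le {ε : ℝ} (hε : 0 < ε) {B C δ : ℝ} (hBC : B ≤ C)
    (hδ : 0 ≤ δ) :
    Real.exp (-C / ε) + Real.exp (-(B + δ) / ε) ≤ Real.exp (-(C + δ) / ε) + Real.exp (-B / ε) := by
  have hshift : ∀ z, Real.exp (-(z + δ) / ε) = Real.exp (-z / ε) * Real.exp (-δ / ε) := by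
    intro z
    rw [← Real.exp_add]
    ring_nf
  have hδ' : Real.exp (-δ / ε) ≤ 1 :=
    Real.exp_le_one_iff.2 (div_nonpos_of_nonpos_of_nonneg (by linarith) hε.le)
  have hCB : Real.exp (-C / ε) ≤ Real.exp (-B / ε) := by gcongr
  rw [hshift, hshift]
  nlinarith [mul_nonneg (sub_nonneg.2 hδ') (sub_nonneg.2 hCB)]

lemma morseInteraction_nonneg_of_le {ε : ℝ} (hε : 0 < ε) {u v a b : ℝ} (huv : u ≤ v)
    (hva : v ≤ a) (hab : a ≤ b) : 0 ≤ morseInteraction ε u v a b := by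
  have key := exp_neg_div_add_exp_neg_div_le hε (show a - v ≤ a - u by linarith)
    (show 0 ≤ b - a by linarith)
  rw [show a - u + (b - a) = b - u by ring, show a - v + (b - a) = b - v by ring] at key
  simp only [morseInteraction, morseSecondPrimitive, abs_of_nonneg (show 0 ≤ a - v by linarith),
    abs_of_nonneg (show 0 ≤ a - u by linarith), abs_of_nonneg (show 0 ≤ b - v by linarith),
    abs_of_nonneg (show 0 ≤ b - u by linarith)]
  nlinarith

lemma morseInteraction_self_nonneg {ε : ℝ} (hε : 0 < ε) {u v : ℝ} (huv : u ≤ v) :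
    0 ≤ morseInteraction ε u v u v := by
  have h := Real.add_one_le_exp ((u - v) / ε)
  have hr : ε * ((u - v) / ε) = u - v := by field_simp
  simp only [morseInteraction, morseSecondPrimitive, sub_self, abs_zero, neg_zero, zero_div,
    Real.exp_zero, abs_of_nonneg (sub_nonneg.2 huv), abs_of_nonpos (sub_nonpos.2 huv), neg_sub]
  nlinarith [mul_le_mul_of_nonneg_left h hε.le]

section OrderedPoints

variable {N : ℕ} {X : ℕ → ℝ}

lemma le_of_forall_lt_succ (hX : ∀ i < N, X i < X (i + 1)) {i j : ℕ} (hij : i ≤ j)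
    (hj : j ≤ N) : X i ≤ X j :=
  (strictMonoOn_Iic_of_lt_succ (by simpa using hX)).monotoneOn
    (Set.mem_Iic.2 (hij.trans hj)) (Set.mem_Iic.2 hj) hij

lemma morseInteraction_nonneg {ε : ℝ} (hε : 0 < ε) (hX : ∀ i < N, X i < X (i + 1)) {i k : ℕ}
    (hi : i < N) (hk : k < N) : 0 ≤ morseInteraction ε (X i) (X (i + 1)) (X k) (X (k + 1)) := by
  rcases lt_trichotomy k i with hki | rfl | hik
  · rw [morseInteraction_comm]
    exact morseInteraction_nonneg_of_le hε (hX k hk).le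
      (le_of_forall_lt_succ hX hki hi.le) (hX i hi).le
  · exact morseInteraction_self_nonneg hε (hX k hk).le
  · exact morseInteraction_nonneg_of_le hε (hX i hi).le
      (le_of_forall_lt_succ hX hik hk.le) (hX k hk).le

lemma sum_morseInteraction_le {ε : ℝ} (hε : 0 < ε) (hX : ∀ i < N, X i < X (i + 1)) {i : ℕ}
    (hi : i < N) :
    ∑ k ∈ range N, morseInteraction ε (X i) (X (i + 1)) (X k) (X (k + 1)) ≤ X (i + 1) - X i := by
  have htelescope := sum_range_sub
    (fun m => morseSecondPrimitive ε (X m - X i) - morseSecondPrimitive ε (X m - X (i + 1))) N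
  have hsum : ∑ k ∈ range N, morseInteraction ε (X i) (X (i + 1)) (X k) (X (k + 1)) =
      (morseSecondPrimitive ε (X N - X i) - morseSecondPrimitive ε (X N - X (i + 1)))
        - (morseSecondPrimitive ε (X i - X 0) - morseSecondPrimitive ε (X (i + 1) - X 0)) := by
    rw [morseSecondPrimitive_sub_comm ε (X i), morseSecondPrimitive_sub_comm ε (X (i + 1)),
      ← htelescope]
    exact sum_congr rfl fun k _ => by simp only [morseInteraction]; ring
  have h0i := le_of_forall_lt_succ hX (Nat.zero_le i) hi.le
  have hiN := le_of_forall_lt_succ hX hi (le_refl N)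
  have hright := morseSecondPrimitive_sub_le hε (sub_nonneg.2 hiN)
    (sub_le_sub_left (hX i hi).le (X N))
  have hleft := morseSecondPrimitive_sub_le hε (sub_nonneg.2 h0i)
    (sub_le_sub_right (hX i hi).le (X 0))
  rw [hsum]
  linarith

lemma abs_sub_mixed_eq_ite (hX : ∀ i < N, X i < X (i + 1)) {i k : ℕ} (hi : i < N)
    (hk : k < N) :
    |X (k + 1) - X i| - |X (k + 1) - X (i + 1)| - |X k - X i| + |X k - X (i + 1)|
      = if k = i then 2 * (X (i + 1) - X i) else 0 := by
  rcases lt_trichotomy k i with hki | rfl | hik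
  · have h1 := le_of_forall_lt_succ hX hki hi.le
    have h2 := (hX i hi).le
    have h3 := (hX k hk).le
    rw [abs_of_nonpos (by linarith), abs_of_nonpos (by linarith), abs_of_nonpos (by linarith),
      abs_of_nonpos (by linarith), if_neg hki.ne]
    ring
  · have h1 := (hX k hk).le
    rw [if_pos rfl, sub_self, sub_self, abs_zero, abs_of_nonneg (by linarith),
      abs_of_nonpos (by linarith)]
    ring
  · have h1 := le_of_forall_lt_succ hX hik hk.le
    have h2 := (hX i hi).le
    have h3 := (hX k hk).le
    rw [abs_of_nonneg (by linarith), abs_of_nonneg (by linarith), abs_of_nonneg (by linarith),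
      abs_of_nonneg (by linarith), if_neg hik.ne']
    ring

/-- The `1` is the contribution of the `|·|/2` part of `W_ε = (G - |·|/2)/ε²`
(`G = morseSecondPrimitive ε`), whose mixed second differences vanish off the diagonal. -/
lemma particleRHS_succ_sub {ε : ℝ} (hε : ε ≠ 0) (hX : ∀ i < N, X i < X (i + 1)) {i : ℕ}
    (hi : i < N) :
    particleRHS ε N X (i + 1) - particleRHS ε N X i
      = (1 - ∑ k ∈ range N,
          morseInteraction ε (X i) (X (i + 1)) (X k) (X (k + 1)) / (X (k + 1) - X k))
        / (N * ε ^ 2) := by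
  have hterm : ∀ k ∈ range N,
      (Morse ε (X (k + 1) - X (i + 1)) - Morse ε (X k - X (i + 1))) / (X (k + 1) - X k)
        - (Morse ε (X (k + 1) - X i) - Morse ε (X k - X i)) / (X (k + 1) - X k)
      = ((if k = i then 1 else 0)
          - morseInteraction ε (X i) (X (i + 1)) (X k) (X (k + 1)) / (X (k + 1) - X k))
        / ε ^ 2 := by
    intro k hk
    have hkN := mem_range.1 hk
    have hdk : X (k + 1) - X k ≠ 0 := sub_ne_zero.2 (hX k hkN).ne'
    have hmorse :
        (Morse ε (X (k + 1) - X (i + 1)) - Morse ε (X k - X (i + 1)))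
          - (Morse ε (X (k + 1) - X i) - Morse ε (X k - X i))
        = ((|X (k + 1) - X i| - |X (k + 1) - X (i + 1)| - |X k - X i| + |X k - X (i + 1)|) / 2
            - morseInteraction ε (X i) (X (i + 1)) (X k) (X (k + 1))) / ε ^ 2 := by
      simp only [morse_eq_morseSecondPrimitive hε, morseInteraction]
      ring
    rw [div_sub_div_same, hmorse, abs_sub_mixed_eq_ite hX hi hkN]
    split_ifs with hki
    · subst hki
      field_simp
    · field_simp
      ring
  have hN : (N : ℝ) ≠ 0 := Nat.cast_ne_zero.2 (by omega)
  unfold particleRHS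
  rw [← mul_sub, ← sum_sub_distrib, sum_congr rfl hterm, ← sum_div, sum_sub_distrib,
    sum_ite_eq' (range N) i (fun _ => (1 : ℝ)), if_pos (mem_range.2 hi)]
  field_simp

lemma pairwiseDisjoint_Ico_of_forall_lt_succ (hX : ∀ i < N, X i < X (i + 1)) :
    (Finset.range N : Set ℕ).PairwiseDisjoint fun k => Set.Ico (X k) (X (k + 1)) := by
  intro j hj k hk hjk
  rw [Function.onFun, Set.disjoint_left]
  rintro y ⟨hjy, hyj⟩ ⟨hky, hyk⟩
  rcases Nat.lt_or_gt_of_ne hjk with h | h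
  · linarith [le_of_forall_lt_succ hX h (Finset.mem_range.1 hk).le]
  · linarith [le_of_forall_lt_succ hX h (Finset.mem_range.1 hj).le]

end OrderedPoints

lemma rpow_neg_div_le {q a b : ℝ} (hq : 0 ≤ q) (ha : 0 < a) (hb : 0 < b) :
    a ^ (-q) / b ≤ q / (q + 1) * a ^ (-(q + 1)) + 1 / (q + 1) * b ^ (-(q + 1)) := by
  have hq1 : 0 < q + 1 := by linarith
  have hamgm := Real.geom_mean_le_arith_mean2_weighted (p₁ := a ^ (-(q + 1)))
    (p₂ := b ^ (-(q + 1))) (by positivity) (by positivity) (by positivity) (by positivity)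
    (show q / (q + 1) + 1 / (q + 1) = 1 by field_simp)
  rwa [← Real.rpow_mul ha.le, ← Real.rpow_mul hb.le,
    show -(q + 1) * (q / (q + 1)) = -q by field_simp,
    show -(q + 1) * (1 / (q + 1)) = -1 by field_simp, Real.rpow_neg_one, ← div_eq_mul_inv]
    at hamgm

/-- By Young's inequality and the symmetry of `A`, the left side is at most
`∑_{i,k} A i k d_i^{-(q+1)}`. -/
lemma sum_sum_mul_rpow_neg_div_le {s : Finset ℕ} {d : ℕ → ℝ} (hd : ∀ k ∈ s, 0 < d k)
    {A : ℕ → ℕ → ℝ} (hA : ∀ i ∈ s, ∀ k ∈ s, 0 ≤ A i k) (hA_symm : ∀ i k, A i k = A k i)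
    (hrow : ∀ i ∈ s, ∑ k ∈ s, A i k ≤ d i) {q : ℝ} (hq : 0 ≤ q) :
    ∑ i ∈ s, ∑ k ∈ s, A i k * (d i ^ (-q) / d k) ≤ ∑ i ∈ s, d i ^ (-q) := by
  set a : ℕ → ℝ := fun i => d i ^ (-(q + 1))
  have hswap : ∑ i ∈ s, ∑ k ∈ s, A i k * a k = ∑ i ∈ s, ∑ k ∈ s, A i k * a i := by
    rw [sum_comm]
    simp only [hA_symm]
  have hq1 : 0 < q + 1 := by linarith
  calc ∑ i ∈ s, ∑ k ∈ s, A i k * (d i ^ (-q) / d k)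
      ≤ ∑ i ∈ s, ∑ k ∈ s, A i k * (q / (q + 1) * a i + 1 / (q + 1) * a k) :=
        sum_le_sum fun i hi => sum_le_sum fun k hk =>
          mul_le_mul_of_nonneg_left (rpow_neg_div_le hq (hd i hi) (hd k hk)) (hA i hi k hk)
    _ = q / (q + 1) * ∑ i ∈ s, ∑ k ∈ s, A i k * a i
          + 1 / (q + 1) * ∑ i ∈ s, ∑ k ∈ s, A i k * a k := by
        simp only [mul_add, sum_add_distrib, mul_sum]
        congr 1 <;> exact sum_congr rfl fun _ _ => sum_congr rfl fun _ _ => by ring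
    _ = ∑ i ∈ s, (∑ k ∈ s, A i k) * a i := by
        rw [hswap, ← add_mul, show q / (q + 1) + 1 / (q + 1) = 1 by field_simp, one_mul]
        simp only [sum_mul]
    _ ≤ ∑ i ∈ s, d i * a i :=
        sum_le_sum fun i hi => mul_le_mul_of_nonneg_right (hrow i hi)
          (Real.rpow_nonneg (hd i hi).le _)
    _ = ∑ i ∈ s, d i ^ (-q) :=
        sum_congr rfl fun i hi => by
          show d i * d i ^ (-(q + 1)) = d i ^ (-q)
          rw [show -q = 1 + -(q + 1) by ring, Real.rpow_add (hd i hi), Real.rpow_one]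

lemma sum_rpow_neg_mul_particleRHS_sub_nonneg {ε : ℝ} (hε : 0 < ε) {N : ℕ} {X : ℕ → ℝ}
    (hX : ∀ i < N, X i < X (i + 1)) {q : ℝ} (hq : 0 ≤ q) :
    0 ≤ ∑ k ∈ range N,
      (X (k + 1) - X k) ^ (-q) * (particleRHS ε N X (k + 1) - particleRHS ε N X k) := by
  set A : ℕ → ℕ → ℝ := fun i k => morseInteraction ε (X i) (X (i + 1)) (X k) (X (k + 1))
  have hyoung := sum_sum_mul_rpow_neg_div_le (s := range N) (d := fun k => X (k + 1) - X k)
    (fun k hk => sub_pos.2 (hX k (mem_range.1 hk)))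
    (fun i hi k hk => morseInteraction_nonneg hε hX (mem_range.1 hi) (mem_range.1 hk))
    (fun i k => morseInteraction_comm ε _ _ _ _)
    (fun i hi => sum_morseInteraction_le hε hX (mem_range.1 hi)) hq
  have hterm : ∀ k ∈ range N,
      (X (k + 1) - X k) ^ (-q) * (particleRHS ε N X (k + 1) - particleRHS ε N X k)
        = ((X (k + 1) - X k) ^ (-q)
            - ∑ j ∈ range N, A k j * ((X (k + 1) - X k) ^ (-q) / (X (j + 1) - X j)))
          / (N * ε ^ 2) := by
    intro k hk
    rw [particleRHS_succ_sub hε.ne' hX (mem_range.1 hk), mul_div_assoc', mul_sub, mul_one,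
      mul_sum]
    congr 2
    exact sum_congr rfl fun j _ => by ring
  rw [sum_congr rfl hterm, ← sum_div, sum_sub_distrib]
  exact div_nonneg (sub_nonneg.2 hyoung) (by positivity)

theorem IsParticleSol.antitoneOn_sum_gap_rpow {ε : ℝ} (hε : 0 < ε) {N : ℕ} {x : ℝ → ℕ → ℝ}
    (hx : IsParticleSol ε N x) {q : ℝ} (hq : 1 ≤ q) :
    AntitoneOn (fun t => ∑ k ∈ range N, (x t (k + 1) - x t k) ^ (1 - q)) (Set.Ici 0) := by
  have hderiv : ∀ s ∈ Set.Ici (0 : ℝ), HasDerivWithinAt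
      (fun t => ∑ k ∈ range N, (x t (k + 1) - x t k) ^ (1 - q))
      ((1 - q) * ∑ k ∈ range N, (x s (k + 1) - x s k) ^ (-q)
        * (particleRHS ε N (x s) (k + 1) - particleRHS ε N (x s) k)) (Set.Ici 0) s := by
    intro s hs
    rw [mul_sum]
    refine HasDerivWithinAt.fun_sum fun k hk => ?_
    have hkN := mem_range.1 hk
    have hgap := (hx.2 (k + 1) hkN s hs).fun_sub (hx.2 k hkN.le s hs)
    have hpow := Real.hasDerivAt_rpow_const (p := 1 - q)
      (Or.inl (sub_pos.2 (hx.1 s hs k hkN)).ne')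
    have hcomp := hpow.comp_hasDerivWithinAt s hgap
    rw [show 1 - q - 1 = -q by ring] at hcomp
    rw [← mul_assoc]
    exact hcomp
  refine antitoneOn_of_hasDerivWithinAt_nonpos (convex_Ici 0)
    (fun s hs => (hderiv s hs).continuousWithinAt)
    (fun s hs => (hderiv s (interior_subset hs)).mono interior_subset) fun s hs => ?_
  exact mul_nonpos_of_nonpos_of_nonneg (by linarith)
    (sum_rpow_neg_mul_particleRHS_sub_nonneg hε (hx.1 s (interior_subset hs)) (by linarith))

section DiscreteDensity

variable {N : ℕ} {x : ℝ → ℕ → ℝ} {s : ℝ}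

lemma discDens_eq_of_mem (hX : ∀ i < N, x s i < x s (i + 1)) {k : ℕ} (hk : k < N) {y : ℝ}
    (hy : y ∈ Set.Ico (x s k) (x s (k + 1))) :
    discDens N x y s = 1 / (N * (x s (k + 1) - x s k)) := by
  unfold discDens
  rw [sum_eq_single_of_mem k (mem_range.2 hk), Set.indicator_of_mem hy]
  intro j hj hjk
  exact Set.indicator_of_notMem (Set.disjoint_left.1
    (pairwiseDisjoint_Ico_of_forall_lt_succ hX hj (mem_range.2 hk) hjk) · hy) _

lemma discDens_eq_zero_of_notMem {y : ℝ}
    (hy : y ∉ ⋃ k ∈ range N, Set.Ico (x s k) (x s (k + 1))) : discDens N x y s = 0 :=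
  sum_eq_zero fun _ hk => Set.indicator_of_notMem (fun hyk => hy (Set.mem_biUnion hk hyk)) _

lemma lintegral_enorm_discDens_rpow (hX : ∀ i < N, x s i < x s (i + 1)) {q : ℝ} (hq : 0 < q) :
    ∫⁻ y, ‖discDens N x y s‖ₑ ^ q
      = ENNReal.ofReal ((N : ℝ) ^ (-q) * ∑ k ∈ range N, (x s (k + 1) - x s k) ^ (1 - q)) := by
  set I : ℕ → Set ℝ := fun k => Set.Ico (x s k) (x s (k + 1))
  have hU : MeasurableSet (⋃ k ∈ range N, I k) :=
    Finset.measurableSet_biUnion _ fun k _ => measurableSet_Ico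
  have hpiece : ∀ k ∈ range N, ∫⁻ y in I k, ‖discDens N x y s‖ₑ ^ q
      = ENNReal.ofReal ((N : ℝ) ^ (-q) * (x s (k + 1) - x s k) ^ (1 - q)) := by
    intro k hk
    have hkN := mem_range.1 hk
    have hd : 0 < x s (k + 1) - x s k := sub_pos.2 (hX k hkN)
    have hN : (0 : ℝ) < N := by exact_mod_cast hkN.pos
    rw [setLIntegral_congr_fun measurableSet_Ico fun y hy => by
        rw [discDens_eq_of_mem hX hkN hy, Real.enorm_eq_ofReal (by positivity)],
      setLIntegral_const, Real.volume_Ico, ENNReal.ofReal_rpow_of_nonneg (by positivity) hq.le,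
      ← ENNReal.ofReal_mul (by positivity), one_div, Real.inv_rpow (by positivity),
      Real.mul_rpow hN.le hd.le, Real.rpow_sub hd, Real.rpow_one, Real.rpow_neg hN.le]
    congr 1
    field_simp
  rw [← lintegral_add_compl _ hU, setLIntegral_congr_fun hU.compl fun y hy => by
      rw [discDens_eq_zero_of_notMem hy, enorm_zero, ENNReal.zero_rpow_of_pos hq],
    lintegral_zero, add_zero, lintegral_biUnion_finset
      (pairwiseDisjoint_Ico_of_forall_lt_succ hX) fun k _ => measurableSet_Ico,
    sum_congr rfl hpiece, ← ENNReal.ofReal_sum_of_nonneg, mul_sum]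
  intro k hk
  have hd : 0 < x s (k + 1) - x s k := sub_pos.2 (hX k (mem_range.1 hk))
  positivity

end DiscreteDensity

lemma le_of_forall_pow_le_mul_pow {a b C : ℝ} (hb : 0 ≤ b) (h : ∀ n : ℕ, a ^ n ≤ C * b ^ n) :
    a ≤ b := by
  by_contra! hba
  rcases hb.eq_or_lt with rfl | hb
  · have h1 := h 1
    rw [pow_one, pow_one, mul_zero] at h1
    linarith
  obtain ⟨n, hn⟩ := pow_unbounded_of_one_lt C ((one_lt_div hb).2 hba)
  rw [div_pow, lt_div_iff₀ (pow_pos hb n)] at hn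
  exact (h n).not_gt hn

lemma Finset.sup'_le_sup'_of_forall_sum_pow_le {ι : Type*} {s : Finset ι} (hs : s.Nonempty)
    {f g : ι → ℝ} (hf : ∀ i ∈ s, 0 ≤ f i) (hg : ∀ i ∈ s, 0 ≤ g i)
    (h : ∀ n : ℕ, ∑ i ∈ s, f i ^ n ≤ ∑ i ∈ s, g i ^ n) : s.sup' hs f ≤ s.sup' hs g := by
  obtain ⟨i, hi, hfi⟩ := exists_mem_eq_sup' hs f
  refine le_of_forall_pow_le_mul_pow (C := s.card) ((hg i hi).trans (le_sup' g hi)) fun n => ?_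
  calc s.sup' hs f ^ n = f i ^ n := by rw [hfi]
    _ ≤ ∑ k ∈ s, f k ^ n := single_le_sum (fun k hk => pow_nonneg (hf k hk) n) hi
    _ ≤ ∑ k ∈ s, g k ^ n := h n
    _ ≤ ∑ _k ∈ s, s.sup' hs g ^ n :=
        sum_le_sum fun k hk => pow_le_pow_left₀ (hg k hk) (le_sup' g hk) n
    _ = s.card * s.sup' hs g ^ n := by rw [sum_const, nsmul_eq_mul]

lemma eLpNorm_discDens_top {N : ℕ} (hN : 0 < N) {x : ℝ → ℕ → ℝ} {s : ℝ}
    (hX : ∀ i < N, x s i < x s (i + 1)) :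
    eLpNorm (fun y => discDens N x y s) ∞ volume
      = ENNReal.ofReal ((N : ℝ)⁻¹ * (Finset.range N).sup' (nonempty_range_iff.2 hN.ne')
          fun k => (x s (k + 1) - x s k)⁻¹) := by
  have hd : ∀ k < N, 0 < x s (k + 1) - x s k := fun k hk => sub_pos.2 (hX k hk)
  have hval : ∀ k < N, ∀ y ∈ Set.Ico (x s k) (x s (k + 1)),
      discDens N x y s = (N : ℝ)⁻¹ * (x s (k + 1) - x s k)⁻¹ := fun k hk y hy => by
    rw [discDens_eq_of_mem hX hk hy, one_div, mul_inv]
  obtain ⟨b, hb, hsup⟩ := exists_mem_eq_sup' (nonempty_range_iff.2 hN.ne')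
    fun k => (x s (k + 1) - x s k)⁻¹
  have hbN := Finset.mem_range.1 hb
  rw [hsup]
  apply le_antisymm
  · rw [eLpNorm_exponent_top]
    refine eLpNormEssSup_le_of_ae_bound (Filter.Eventually.of_forall fun y => ?_)
    by_cases hy : y ∈ ⋃ k ∈ Finset.range N, Set.Ico (x s k) (x s (k + 1))
    · obtain ⟨k, hk, hyk⟩ := Set.mem_iUnion₂.1 hy
      have hkN := Finset.mem_range.1 hk
      have hsup_k := le_sup' (fun k => (x s (k + 1) - x s k)⁻¹) hk
      rw [hsup] at hsup_k
      rw [hval k hkN y hyk, Real.norm_of_nonneg (by have := hd k hkN; positivity)]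
      gcongr
    · have := hd b hbN
      rw [discDens_eq_zero_of_notMem hy, norm_zero]
      positivity
  · have hI : volume.restrict (Set.Ico (x s b) (x s (b + 1))) ≠ 0 := by
      simpa [Measure.restrict_eq_zero] using hd b hbN
    calc ENNReal.ofReal ((N : ℝ)⁻¹ * (x s (b + 1) - x s b)⁻¹)
        = eLpNorm (fun _ => (N : ℝ)⁻¹ * (x s (b + 1) - x s b)⁻¹) ∞
            (volume.restrict (Set.Ico (x s b) (x s (b + 1)))) := by
          rw [eLpNorm_exponent_top, eLpNormEssSup_const _ hI,
            Real.enorm_eq_ofReal (by have := hd b hbN; positivity)]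
      _ = eLpNorm (fun y => discDens N x y s) ∞
            (volume.restrict (Set.Ico (x s b) (x s (b + 1)))) :=
          eLpNorm_congr_ae (ae_restrict_of_forall_mem measurableSet_Ico
            fun y hy => (hval b hbN y hy).symm)
      _ ≤ eLpNorm (fun y => discDens N x y s) ∞ volume :=
          eLpNorm_mono_measure _ Measure.restrict_le_self

theorem IsParticleSol.sum_inv_gap_pow_le {ε : ℝ} (hε : 0 < ε) {N : ℕ} {x : ℝ → ℕ → ℝ}
    (hx : IsParticleSol ε N x) {t : ℝ} (ht : 0 ≤ t) (n : ℕ) :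
    ∑ k ∈ Finset.range N, (x t (k + 1) - x t k)⁻¹ ^ n
      ≤ ∑ k ∈ Finset.range N, (x 0 (k + 1) - x 0 k)⁻¹ ^ n := by
  have hpow : ∀ s, 0 ≤ s → ∀ k ∈ Finset.range N,
      (x s (k + 1) - x s k)⁻¹ ^ n = (x s (k + 1) - x s k) ^ (1 - ((n : ℝ) + 1)) := by
    intro s hs k hk
    rw [show 1 - ((n : ℝ) + 1) = -n by ring,
      Real.rpow_neg (sub_pos.2 (hx.1 s hs k (Finset.mem_range.1 hk))).le, Real.rpow_natCast,
      inv_pow]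
  rw [sum_congr rfl (hpow t ht), sum_congr rfl (hpow 0 le_rfl)]
  exact hx.antitoneOn_sum_gap_rpow hε (by linarith [n.cast_nonneg (α := ℝ)])
    Set.self_mem_Ici ht ht

/-- `L^p` contractivity. For a strictly ordered particle solution and any
`p ∈ (1,∞]`, `‖ρ^N(·,t)‖_{L^p} ≤ ‖ρ^N(·,0)‖_{L^p}` for all `t ≥ 0`. -/
theorem stmt8 (ε : ℝ) (hε : 0 < ε) (N : ℕ) (hN : 1 ≤ N) (x : ℝ → ℕ → ℝ)
    (hx : IsParticleSol ε N x) :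
    ∀ p : ℝ≥0∞, 1 < p → ∀ t : ℝ, 0 ≤ t →
      eLpNorm (fun y => discDens N x y t) p volume ≤
        eLpNorm (fun y => discDens N x y 0) p volume := by
  intro p hp t ht
  rcases eq_or_ne p ∞ with rfl | hp_top
  · rw [eLpNorm_discDens_top hN (hx.1 t ht), eLpNorm_discDens_top hN (hx.1 0 le_rfl)]
    gcongr ENNReal.ofReal (_ * ?_)
    exact sup'_le_sup'_of_forall_sum_pow_le _
      (fun k hk => inv_nonneg.2 (sub_nonneg.2 (hx.1 t ht k (Finset.mem_range.1 hk)).le))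
      (fun k hk => inv_nonneg.2 (sub_nonneg.2 (hx.1 0 le_rfl k (Finset.mem_range.1 hk)).le))
      (hx.sum_inv_gap_pow_le hε ht)
  · have hp0 : p ≠ 0 := (zero_lt_one.trans hp).ne'
    have hq : 1 < p.toReal := by simpa using ENNReal.toReal_strict_mono hp_top hp
    rw [eLpNorm_eq_lintegral_rpow_enorm_toReal hp0 hp_top,
      eLpNorm_eq_lintegral_rpow_enorm_toReal hp0 hp_top,
      lintegral_enorm_discDens_rpow (hx.1 t ht) (by linarith),
      lintegral_enorm_discDens_rpow (hx.1 0 le_rfl) (by linarith)]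
    gcongr (ENNReal.ofReal (_ * ?_)) ^ _
    exact hx.antitoneOn_sum_gap_rpow hε hq.le Set.self_mem_Ici ht ht
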